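/- arXiv:2303.06295 — 7 statements merged into one kernel-verified Lean document; each statement's English description precedes it below -/
import Mathlib

section
/- Let F be a commutative ring, and let A be an m×n matrix, B a p×q matrix, and C a u×v matrix over F. Then the semi-tensor product is associative: A ⋉ (B ⋉ C) = (A ⋉ B) ⋉ C (both sides being matrices of the same dimensions, identified via the canonical reindexing of index types). -/
open Matrix Kronecker

/-- The semi-tensor product (STP) of matrices: for `A : F^{m×n}` and `B : F^{p×q}`,
with `t = lcm n p`, `A ⋉ B := (A ⊗ I_{t/n}) * (B ⊗ I_{t/p})`, where the factors are
multiplied after the canonical identifications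
`Fin n × Fin (t/n) ≃ Fin t ≃ Fin p × Fin (t/p)` of index types. -/
def stp {F : Type*} [CommRing F] {m n p q : ℕ}
    (A : Matrix (Fin m) (Fin n) F) (B : Matrix (Fin p) (Fin q) F) :
    Matrix (Fin (m * (Nat.lcm n p / n))) (Fin (q * (Nat.lcm n p / p))) F :=
  (Matrix.reindex finProdFinEquiv
      (finProdFinEquiv.trans (finCongr (Nat.mul_div_cancel' (Nat.dvd_lcm_left n p))))
      (A ⊗ₖ (1 : Matrix (Fin (Nat.lcm n p / n)) (Fin (Nat.lcm n p / n)) F))) *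
  (Matrix.reindex
      (finProdFinEquiv.trans (finCongr (Nat.mul_div_cancel' (Nat.dvd_lcm_right n p))))
      finProdFinEquiv
      (B ⊗ₖ (1 : Matrix (Fin (Nat.lcm n p / p)) (Fin (Nat.lcm n p / p)) F)))

section Aux

set_option linter.unusedSectionVars false

/-! ### Arithmetic lemmas -/

lemma stpAux_arithG (n p q u : ℕ) :
    Nat.lcm n (p * (Nat.lcm q u / q)) * q = Nat.lcm (q * (Nat.lcm n p / p)) u * p := by
  have h1 : p * (Nat.lcm q u / q) * q = p * Nat.lcm q u := by
    rw [mul_assoc, Nat.div_mul_cancel (Nat.dvd_lcm_left q u)]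
  have h2 : q * (Nat.lcm n p / p) * p = q * Nat.lcm n p := by
    rw [mul_assoc, Nat.div_mul_cancel (Nat.dvd_lcm_right n p)]
  calc Nat.lcm n (p * (Nat.lcm q u / q)) * q
      = Nat.lcm (n * q) (p * (Nat.lcm q u / q) * q) := (Nat.lcm_mul_right _ _ _).symm
    _ = Nat.lcm (n * q) (Nat.lcm (p * q) (p * u)) := by rw [h1, Nat.lcm_mul_left]
    _ = Nat.lcm (Nat.lcm (n * q) (p * q)) (p * u) := (Nat.lcm_assoc _ _ _).symm
    _ = Nat.lcm (Nat.lcm n p * q) (p * u) := by rw [Nat.lcm_mul_right]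
    _ = Nat.lcm (q * Nat.lcm n p) (u * p) := by rw [mul_comm _ q, mul_comm p u]
    _ = Nat.lcm (q * (Nat.lcm n p / p) * p) (u * p) := by rw [h2]
    _ = Nat.lcm (q * (Nat.lcm n p / p)) u * p := Nat.lcm_mul_right _ _ _

section
variable (n p q u : ℕ)

local notation "S" => Nat.lcm n (p * (Nat.lcm q u / q))
local notation "S'" => Nat.lcm (q * (Nat.lcm n p / p)) u
local notation "Q" => q * (Nat.lcm n p / p)
local notation "P" => p * (Nat.lcm q u / q)

lemma stpAux_arithE : S * Q = Nat.lcm n p * S' := by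
  have hd : p ∣ Nat.lcm n p := Nat.dvd_lcm_right n p
  calc S * Q = S * q * (Nat.lcm n p / p) := by ring
    _ = S' * p * (Nat.lcm n p / p) := by rw [stpAux_arithG]
    _ = S' * (Nat.lcm n p / p * p) := by ring
    _ = Nat.lcm n p * S' := by rw [Nat.div_mul_cancel hd, mul_comm]

lemma stpAux_arithF1 : S / n = (Nat.lcm n p / n) * (S' / Q) := by
  rcases Nat.eq_zero_or_pos n with hn | hn
  · subst hn; simp
  rcases Nat.eq_zero_or_pos p with hp | hp
  · subst hp; simp
  rcases Nat.eq_zero_or_pos q with hq | hq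
  · subst hq; simp
  have hQ : 0 < Q := by
    have h1 : 0 < Nat.lcm n p := Nat.pos_of_ne_zero (Nat.lcm_ne_zero hn.ne' hp.ne')
    have h2 : 0 < Nat.lcm n p / p := Nat.div_pos (Nat.le_of_dvd h1 (Nat.dvd_lcm_right n p)) hp
    positivity
  refine Nat.div_eq_of_eq_mul_left hn ?_
  calc S = S * Q / Q := (Nat.mul_div_cancel _ hQ).symm
    _ = Nat.lcm n p * S' / Q := by rw [stpAux_arithE]
    _ = Nat.lcm n p * (S' / Q) := Nat.mul_div_assoc _ (Nat.dvd_lcm_left _ u)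
    _ = n * (Nat.lcm n p / n) * (S' / Q) := by rw [Nat.mul_div_cancel' (Nat.dvd_lcm_left n p)]
    _ = Nat.lcm n p / n * (S' / Q) * n := by ring

lemma stpAux_arithF2 :
    (Nat.lcm q u / q) * (S / P) = (Nat.lcm n p / p) * (S' / Q) := by
  rcases Nat.eq_zero_or_pos n with hn | hn
  · subst hn; simp
  rcases Nat.eq_zero_or_pos p with hp | hp
  · subst hp; simp
  rcases Nat.eq_zero_or_pos q with hq | hq
  · subst hq; simp
  rcases Nat.eq_zero_or_pos u with hu | hu
  · subst hu; simp
  have hl2 : 0 < Nat.lcm n p := Nat.pos_of_ne_zero (Nat.lcm_ne_zero hn.ne' hp.ne')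
  have hl1 : 0 < Nat.lcm q u := Nat.pos_of_ne_zero (Nat.lcm_ne_zero hq.ne' hu.ne')
  have hβ : 0 < Nat.lcm q u / q := Nat.div_pos (Nat.le_of_dvd hl1 (Nat.dvd_lcm_left q u)) hq
  have hδ : 0 < Nat.lcm n p / p := Nat.div_pos (Nat.le_of_dvd hl2 (Nat.dvd_lcm_right n p)) hp
  have hPS : P ∣ S := Nat.dvd_lcm_right _ _
  have hQS : Q ∣ S' := Nat.dvd_lcm_left _ _
  have e1 : (Nat.lcm q u / q) * (S / P) = S / p := by
    rw [← Nat.mul_div_assoc _ hPS, mul_comm p (Nat.lcm q u / q),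
      Nat.mul_div_mul_left _ _ hβ]
  have e2 : (Nat.lcm n p / p) * (S' / Q) = S' / q := by
    rw [← Nat.mul_div_assoc _ hQS, mul_comm q (Nat.lcm n p / p),
      Nat.mul_div_mul_left _ _ hδ]
  rw [e1, e2, ← Nat.mul_div_mul_right S p hq, ← Nat.mul_div_mul_right S' q hp, stpAux_arithG,
    mul_comm q p]

lemma stpAux_arithF3 :
    (Nat.lcm q u / u) * (S / P) = S' / u := by
  rcases Nat.eq_zero_or_pos n with hn | hn
  · subst hn; simp
  rcases Nat.eq_zero_or_pos p with hp | hp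
  · subst hp; simp
  rcases Nat.eq_zero_or_pos q with hq | hq
  · subst hq; simp
  rcases Nat.eq_zero_or_pos u with hu | hu
  · subst hu; simp
  have hl1 : 0 < Nat.lcm q u := Nat.pos_of_ne_zero (Nat.lcm_ne_zero hq.ne' hu.ne')
  have hβ : 0 < Nat.lcm q u / q := Nat.div_pos (Nat.le_of_dvd hl1 (Nat.dvd_lcm_left q u)) hq
  have hPS : P ∣ S := Nat.dvd_lcm_right _ _
  have hpS : p ∣ S := dvd_trans (Dvd.intro _ rfl) hPS
  have e1 : (Nat.lcm q u / q) * (S / P) = S / p := by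
    rw [← Nat.mul_div_assoc _ hPS, mul_comm p (Nat.lcm q u / q),
      Nat.mul_div_mul_left _ _ hβ]
  symm
  refine Nat.div_eq_of_eq_mul_left hu ?_
  calc S' = S' * p / p := (Nat.mul_div_cancel _ hp).symm
    _ = S * q / p := by rw [← stpAux_arithG]
    _ = q * S / p := by rw [mul_comm]
    _ = q * (S / p) := Nat.mul_div_assoc q hpS
    _ = q * ((Nat.lcm q u / q) * (S / P)) := by rw [e1]
    _ = Nat.lcm q u * (S / P) := by rw [← mul_assoc, Nat.mul_div_cancel' (Nat.dvd_lcm_left q u)]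
    _ = u * (Nat.lcm q u / u) * (S / P) := by
        rw [Nat.mul_div_cancel' (Nat.dvd_lcm_right q u)]
    _ = Nat.lcm q u / u * (S / P) * u := by ring
end

/-! ### Matrix casting and tensoring lemmas -/

variable {F : Type*} [CommRing F]

/-- cast a matrix along equalities of its `Fin` dimensions -/
def mcast {m m' n n' : ℕ} (h₁ : m = m') (h₂ : n = n') (M : Matrix (Fin m) (Fin n) F) :
    Matrix (Fin m') (Fin n') F :=
  Matrix.reindex (finCongr h₁) (finCongr h₂) M

/-- tensor with the identity on the right, with `Fin` index bookkeeping -/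
def emb {m n : ℕ} (A : Matrix (Fin m) (Fin n) F) (k : ℕ) :
    Matrix (Fin (m * k)) (Fin (n * k)) F :=
  Matrix.reindex finProdFinEquiv finProdFinEquiv (A ⊗ₖ (1 : Matrix (Fin k) (Fin k) F))

lemma mcast_mcast {m m' m'' n n' n'' : ℕ} (h₁ : m = m') (h₂ : n = n')
    (g₁ : m' = m'') (g₂ : n' = n'') (M : Matrix (Fin m) (Fin n) F) :
    mcast g₁ g₂ (mcast h₁ h₂ M) = mcast (h₁.trans g₁) (h₂.trans g₂) M := by
  subst h₁ h₂ g₁ g₂; rfl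

lemma mcast_mul_mcast {r s s' d w r' w' : ℕ} (h₁ : r = r') (h₂ : s = d) (h₂' : s' = d)
    (h₃ : w = w') (M : Matrix (Fin r) (Fin s) F) (N : Matrix (Fin s') (Fin w) F) :
    (mcast h₁ h₂ M) * (mcast h₂' h₃ N)
      = mcast h₁ h₃ (M * mcast (h₂'.trans h₂.symm) rfl N) := by
  subst h₁ h₂ h₂' h₃; rfl

lemma emb_mul {m n q : ℕ} (A : Matrix (Fin m) (Fin n) F) (B : Matrix (Fin n) (Fin q) F)
    (k : ℕ) : emb A k * emb B k = emb (A * B) k := by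
  simp only [emb, Matrix.reindex_apply]
  rw [Matrix.submatrix_mul_equiv, ← Matrix.mul_kronecker_mul, Matrix.one_mul]

lemma emb_mcast {m m' n n' : ℕ} (h₁ : m = m') (h₂ : n = n')
    (M : Matrix (Fin m) (Fin n) F) (k : ℕ) :
    emb (mcast h₁ h₂ M) k
      = mcast (congrArg (· * k) h₁) (congrArg (· * k) h₂) (emb M k) := by
  subst h₁ h₂; rfl

lemma emb_apply {m n : ℕ} (A : Matrix (Fin m) (Fin n) F) (k : ℕ)
    (i : Fin (m * k)) (j : Fin (n * k)) :
    emb A k i j = A i.divNat j.divNat * (if i.modNat = j.modNat then 1 else 0) := by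
  simp [emb, Matrix.one_apply]

lemma mcast_apply {m m' n n' : ℕ} (h₁ : m = m') (h₂ : n = n') (M : Matrix (Fin m) (Fin n) F)
    (i : Fin m') (j : Fin n') :
    mcast h₁ h₂ M i j = M (Fin.cast h₁.symm i) (Fin.cast h₂.symm j) := rfl

lemma emb_emb {m n : ℕ} (A : Matrix (Fin m) (Fin n) F) (b c : ℕ) :
    emb (emb A b) c = mcast (mul_assoc m b c).symm (mul_assoc n b c).symm (emb A (b * c)) := by
  ext i j
  have hc : 0 < c := by
    rcases Nat.eq_zero_or_pos c with h | h
    · exact absurd i.2 (by simp [h])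
    · exact h
  rw [emb_apply, emb_apply, mcast_apply, emb_apply]
  have hdiv : ∀ (w : ℕ) (x : Fin (w * b * c)),
      (x.divNat.divNat : ℕ) = ((Fin.cast (mul_assoc w b c) x).divNat : ℕ) := by
    intro w x
    simp [Fin.coe_divNat, Nat.div_div_eq_div_mul, Nat.mul_comm c b]
  have key : ((i.divNat.modNat = j.divNat.modNat) ∧ i.modNat = j.modNat) ↔
      ((Fin.cast (mul_assoc m b c) i).modNat = (Fin.cast (mul_assoc n b c) j).modNat) := by
    simp only [Fin.ext_iff, Fin.coe_modNat, Fin.coe_divNat, Fin.coe_cast]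
    rw [show b * c = c * b from Nat.mul_comm b c, Nat.mod_mul, Nat.mod_mul]
    constructor
    · rintro ⟨h1, h2⟩; rw [h1, h2]
    · intro h
      have h2 : (i : ℕ) % c = (j : ℕ) % c := by
        have := congrArg (· % c) h
        simpa [Nat.add_mul_mod_self_left] using this
      refine ⟨?_, h2⟩
      rw [h2] at h
      exact Nat.eq_of_mul_eq_mul_left hc (by omega)
  rw [mul_assoc]
  congr 1
  · congr 1 <;> exact Fin.ext (hdiv _ _)
  · split_ifs <;> simp_all

lemma canon_congr {m n p q u v : ℕ}
    (A : Matrix (Fin m) (Fin n) F) (B : Matrix (Fin p) (Fin q) F) (C : Matrix (Fin u) (Fin v) F)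
    {a a' b b' c c' s₂ s₂' w₂ w₂' R W : ℕ} (ha : a = a') (hb : b = b') (hc : c = c')
    {K₁ : u * c = q * b} {K₂ : v * c = s₂} {G₁ : p * b = n * a} {G₂ : s₂ = w₂}
    {H₁ : m * a = R} {H₂ : w₂ = W}
    {K₁' : u * c' = q * b'} {K₂' : v * c' = s₂'} {G₁' : p * b' = n * a'} {G₂' : s₂' = w₂'}
    {H₁' : m * a' = R} {H₂' : w₂' = W} :
    mcast H₁ H₂ (emb A a * mcast G₁ G₂ (emb B b * mcast K₁ K₂ (emb C c)))
      = mcast H₁' H₂' (emb A a' * mcast G₁' G₂' (emb B b' * mcast K₁' K₂' (emb C c'))) := by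
  subst_vars
  rfl

lemma stp_eq {m n p q : ℕ} (A : Matrix (Fin m) (Fin n) F) (B : Matrix (Fin p) (Fin q) F) :
    stp A B = mcast rfl (Nat.mul_div_cancel' (Nat.dvd_lcm_left n p)) (emb A (Nat.lcm n p / n))
      * mcast (Nat.mul_div_cancel' (Nat.dvd_lcm_right n p)) rfl (emb B (Nat.lcm n p / p)) := rfl

end Aux

/-- Associativity of the semi-tensor product of matrices:
`A ⋉ (B ⋉ C) = (A ⋉ B) ⋉ C`, both sides identified via the canonical
reindexing (`finCongr`) of their (numerically equal) dimensions. -/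
theorem stp_assoc {F : Type*} [CommRing F] {m n p q u v : ℕ}
    (A : Matrix (Fin m) (Fin n) F) (B : Matrix (Fin p) (Fin q) F)
    (C : Matrix (Fin u) (Fin v) F) :
    ∃ (h₁ : m * (Nat.lcm n (p * (Nat.lcm q u / q)) / n)
          = m * (Nat.lcm n p / n) * (Nat.lcm (q * (Nat.lcm n p / p)) u / (q * (Nat.lcm n p / p))))
      (h₂ : v * (Nat.lcm q u / u) * (Nat.lcm n (p * (Nat.lcm q u / q)) / (p * (Nat.lcm q u / q)))
          = v * (Nat.lcm (q * (Nat.lcm n p / p)) u / u)),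
      Matrix.reindex (finCongr h₁) (finCongr h₂) (stp A (stp B C)) = stp (stp A B) C := by
  have F1 := stpAux_arithF1 n p q u
  have F2 := stpAux_arithF2 n p q u
  have F3 := stpAux_arithF3 n p q u
  have h₁ : m * (Nat.lcm n (p * (Nat.lcm q u / q)) / n)
      = m * (Nat.lcm n p / n) * (Nat.lcm (q * (Nat.lcm n p / p)) u / (q * (Nat.lcm n p / p))) := by
    rw [F1, mul_assoc]
  have h₂ : v * (Nat.lcm q u / u) * (Nat.lcm n (p * (Nat.lcm q u / q)) / (p * (Nat.lcm q u / q)))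
      = v * (Nat.lcm (q * (Nat.lcm n p / p)) u / u) := by
    rw [mul_assoc, F3]
  refine ⟨h₁, h₂, ?_⟩
  show mcast h₁ h₂ (stp A (stp B C)) = stp (stp A B) C
  simp only [stp_eq, ← emb_mul, emb_mcast, emb_emb, mcast_mcast, mcast_mul_mcast,
    Matrix.mul_assoc]
  exact canon_congr A B C F1 F2 F3
end

section
/- Let F be a commutative ring, A an m×n matrix and B a p×q matrix over F. Then (A ⋉ B)ᵀ = Bᵀ ⋉ Aᵀ, where ᵀ denotes matrix transpose (both sides being matrices of the same dimensions, identified via the canonical reindexing of index types). -/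
open Matrix Kronecker

/-! Computed over an arbitrary common multiple `t` of the inner dimensions, the semi-tensor
product satisfies `(A ⋉ B)ᵀ = Bᵀ ⋉ Aᵀ` on the nose: transposition turns `A ⊗ I` into `Aᵀ ⊗ I`,
swaps the two reindexings, and reverses the product. The only discrepancy left in the theorem is
that `Bᵀ ⋉ Aᵀ` uses `lcm p n` where `A ⋉ B` uses `lcm n p`, which `finCongr` absorbs. -/

def stpAt {F : Type*} [CommSemiring F] {m n p q : ℕ} (t : ℕ) (hn : n ∣ t) (hp : p ∣ t)
    (A : Matrix (Fin m) (Fin n) F) (B : Matrix (Fin p) (Fin q) F) :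
    Matrix (Fin (m * (t / n))) (Fin (q * (t / p))) F :=
  reindex finProdFinEquiv (finProdFinEquiv.trans (finCongr (Nat.mul_div_cancel' hn)))
      (A ⊗ₖ (1 : Matrix (Fin (t / n)) (Fin (t / n)) F)) *
    reindex (finProdFinEquiv.trans (finCongr (Nat.mul_div_cancel' hp))) finProdFinEquiv
      (B ⊗ₖ (1 : Matrix (Fin (t / p)) (Fin (t / p)) F))

section

variable {F : Type*} {m n p q : ℕ}

theorem stp_eq_stpAt [CommRing F] (A : Matrix (Fin m) (Fin n) F) (B : Matrix (Fin p) (Fin q) F) :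
    stp A B = stpAt (Nat.lcm n p) (Nat.dvd_lcm_left n p) (Nat.dvd_lcm_right n p) A B :=
  rfl

variable [CommSemiring F]

theorem transpose_stpAt (t : ℕ) (hn : n ∣ t) (hp : p ∣ t)
    (A : Matrix (Fin m) (Fin n) F) (B : Matrix (Fin p) (Fin q) F) :
    (stpAt t hn hp A B)ᵀ = stpAt t hp hn Bᵀ Aᵀ := by
  simp only [stpAt, transpose_mul, transpose_reindex, ← kroneckerMap_transpose, transpose_one]

theorem stpAt_eq_reindex_of_eq {t t' : ℕ} (h : t = t') (hn : n ∣ t) (hp : p ∣ t)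
    (A : Matrix (Fin m) (Fin n) F) (B : Matrix (Fin p) (Fin q) F) :
    stpAt t' (h ▸ hn) (h ▸ hp) A B =
      reindex (finCongr (by rw [h])) (finCongr (by rw [h])) (stpAt t hn hp A B) := by
  subst h
  rfl

end

/-- `(A ⋉ B)ᵀ = Bᵀ ⋉ Aᵀ`, both sides identified via the canonical reindexing
(`finCongr`) of their (numerically equal) dimensions. -/
theorem stp_transpose {F : Type*} [CommRing F] {m n p q : ℕ}
    (A : Matrix (Fin m) (Fin n) F) (B : Matrix (Fin p) (Fin q) F) :
    ∃ (h₁ : q * (Nat.lcm p n / p) = q * (Nat.lcm n p / p))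
      (h₂ : m * (Nat.lcm p n / n) = m * (Nat.lcm n p / n)),
      (stp A B)ᵀ = Matrix.reindex (finCongr h₁) (finCongr h₂) (stp Bᵀ Aᵀ) := by
  have hlcm : Nat.lcm p n = Nat.lcm n p := Nat.lcm_comm p n
  refine ⟨by rw [hlcm], by rw [hlcm], ?_⟩
  rw [stp_eq_stpAt, stp_eq_stpAt, transpose_stpAt, stpAt_eq_reindex_of_eq hlcm]
end

section
/- Let F be a field, A an invertible n×n matrix and B an invertible p×p matrix over F, and t = lcm(n,p). Then the t×t matrix A ⋉ B is invertible and (A ⋉ B)⁻¹ = B⁻¹ ⋉ A⁻¹; equivalently, (A ⋉ B)(B⁻¹ ⋉ A⁻¹) = I_t and (B⁻¹ ⋉ A⁻¹)(A ⋉ B) = I_t. -/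
open Matrix Kronecker

/-- For square matrices `A : F^{n×n}` and `B : F^{p×p}`, the STP `A ⋉ B` is a
`t × t` matrix, `t = lcm n p`, after the canonical reindexing of index types. -/
def stpSq {F : Type*} [CommRing F] {n p : ℕ}
    (A : Matrix (Fin n) (Fin n) F) (B : Matrix (Fin p) (Fin p) F) :
    Matrix (Fin (Nat.lcm n p)) (Fin (Nat.lcm n p)) F :=
  Matrix.reindex (finCongr (Nat.mul_div_cancel' (Nat.dvd_lcm_left n p)))
    (finCongr (Nat.mul_div_cancel' (Nat.dvd_lcm_right n p))) (stp A B)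

/-! In `t × t` form, `A ⋉ B = (A ⊗ I) * (B ⊗ I)` and, after identifying `lcm p n` with
`lcm n p`, `B⁻¹ ⋉ A⁻¹ = (B⁻¹ ⊗ I) * (A⁻¹ ⊗ I)` with the same two Kronecker factors. Since
`M ↦ M ⊗ I` is multiplicative, the products of `A ⋉ B` and `B⁻¹ ⋉ A⁻¹` telescope to the
identity in both orders. -/

theorem reindex_kronecker_one_mul_eq_one {R : Type*} [CommSemiring R] {m k l : Type*} [Fintype m]
    [Fintype k] [Fintype l] [DecidableEq m] [DecidableEq k] [DecidableEq l] (e : m × k ≃ l)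
    {A A' : Matrix m m R} (h : A * A' = 1) :
    reindex e e (A ⊗ₖ (1 : Matrix k k R)) * reindex e e (A' ⊗ₖ (1 : Matrix k k R)) = 1 := by
  rw [reindex_apply, reindex_apply, submatrix_mul_equiv, ← mul_kronecker_mul, h, one_mul,
    one_kronecker_one, submatrix_one_equiv]

theorem reindex_finCongr_kronecker_one {R : Type*} [MulZeroOneClass R] {k a b s t : ℕ}
    (M : Matrix (Fin k) (Fin k) R) (hab : a = b) (ha : k * a = s) (hb : k * b = t)
    (hst : s = t) :
    reindex (finCongr hst) (finCongr hst)
        (reindex (finProdFinEquiv.trans (finCongr ha)) (finProdFinEquiv.trans (finCongr ha))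
          (M ⊗ₖ (1 : Matrix (Fin a) (Fin a) R))) =
      reindex (finProdFinEquiv.trans (finCongr hb)) (finProdFinEquiv.trans (finCongr hb))
        (M ⊗ₖ (1 : Matrix (Fin b) (Fin b) R)) := by
  subst hab hst
  rfl

section Factors

variable {F : Type*} [CommRing F] {n p : ℕ}

def stpLeftFactor (p : ℕ) (A : Matrix (Fin n) (Fin n) F) :
    Matrix (Fin (Nat.lcm n p)) (Fin (Nat.lcm n p)) F :=
  reindex (finProdFinEquiv.trans (finCongr (Nat.mul_div_cancel' (Nat.dvd_lcm_left n p))))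
    (finProdFinEquiv.trans (finCongr (Nat.mul_div_cancel' (Nat.dvd_lcm_left n p))))
    (A ⊗ₖ (1 : Matrix (Fin (Nat.lcm n p / n)) (Fin (Nat.lcm n p / n)) F))

def stpRightFactor (n : ℕ) (B : Matrix (Fin p) (Fin p) F) :
    Matrix (Fin (Nat.lcm n p)) (Fin (Nat.lcm n p)) F :=
  reindex (finProdFinEquiv.trans (finCongr (Nat.mul_div_cancel' (Nat.dvd_lcm_right n p))))
    (finProdFinEquiv.trans (finCongr (Nat.mul_div_cancel' (Nat.dvd_lcm_right n p))))
    (B ⊗ₖ (1 : Matrix (Fin (Nat.lcm n p / p)) (Fin (Nat.lcm n p / p)) F))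

theorem stpSq_eq_mul (A : Matrix (Fin n) (Fin n) F) (B : Matrix (Fin p) (Fin p) F) :
    stpSq A B = stpLeftFactor p A * stpRightFactor n B :=
  rfl

theorem reindex_stpSq_lcm_comm (A : Matrix (Fin n) (Fin n) F) (B : Matrix (Fin p) (Fin p) F) :
    reindex (finCongr (Nat.lcm_comm p n)) (finCongr (Nat.lcm_comm p n)) (stpSq B A) =
      stpRightFactor n B * stpLeftFactor p A := by
  rw [stpSq_eq_mul, reindex_apply, ← submatrix_mul_equiv _ _ _ (finCongr (Nat.lcm_comm p n)).symm,
    ← reindex_apply, ← reindex_apply]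
  congr 1 <;> exact reindex_finCongr_kronecker_one _ (by rw [Nat.lcm_comm]) _ _ _

end Factors

/-- If `A` and `B` are invertible square matrices, then `A ⋉ B` is an invertible
`t × t` matrix (`t = lcm n p`) and `(A ⋉ B)⁻¹ = B⁻¹ ⋉ A⁻¹`; equivalently,
`(A ⋉ B) * (B⁻¹ ⋉ A⁻¹) = I_t` and `(B⁻¹ ⋉ A⁻¹) * (A ⋉ B) = I_t`
(the product `B⁻¹ ⋉ A⁻¹`, a `lcm p n × lcm p n` matrix, being identified with a
`t × t` matrix via the canonical reindexing). -/
theorem stp_inv {F : Type*} [Field F] {n p : ℕ}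
    (A : Matrix (Fin n) (Fin n) F) (B : Matrix (Fin p) (Fin p) F)
    (hA : IsUnit A.det) (hB : IsUnit B.det) :
    IsUnit (stpSq A B).det ∧
    (stpSq A B)⁻¹
      = Matrix.reindex (finCongr (Nat.lcm_comm p n)) (finCongr (Nat.lcm_comm p n))
          (stpSq B⁻¹ A⁻¹) ∧
    stpSq A B *
        Matrix.reindex (finCongr (Nat.lcm_comm p n)) (finCongr (Nat.lcm_comm p n))
          (stpSq B⁻¹ A⁻¹) = 1 ∧
    Matrix.reindex (finCongr (Nat.lcm_comm p n)) (finCongr (Nat.lcm_comm p n))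
          (stpSq B⁻¹ A⁻¹) * stpSq A B = 1 := by
  rw [reindex_stpSq_lcm_comm, stpSq_eq_mul]
  have hAA : stpLeftFactor p A * stpLeftFactor p A⁻¹ = 1 :=
    reindex_kronecker_one_mul_eq_one _ (mul_nonsing_inv A hA)
  have hAA' : stpLeftFactor p A⁻¹ * stpLeftFactor p A = 1 :=
    reindex_kronecker_one_mul_eq_one _ (nonsing_inv_mul A hA)
  have hBB : stpRightFactor n B * stpRightFactor n B⁻¹ = 1 :=
    reindex_kronecker_one_mul_eq_one _ (mul_nonsing_inv B hB)
  have hBB' : stpRightFactor n B⁻¹ * stpRightFactor n B = 1 :=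
    reindex_kronecker_one_mul_eq_one _ (nonsing_inv_mul B hB)
  have right_inv : stpLeftFactor p A * stpRightFactor n B *
      (stpRightFactor n B⁻¹ * stpLeftFactor p A⁻¹) = 1 := by
    rw [mul_assoc, ← mul_assoc (stpRightFactor n B), hBB, one_mul, hAA]
  have left_inv : stpRightFactor n B⁻¹ * stpLeftFactor p A⁻¹ *
      (stpLeftFactor p A * stpRightFactor n B) = 1 := by
    rw [mul_assoc, ← mul_assoc (stpLeftFactor p A⁻¹), hAA', one_mul, hBB']
  exact ⟨isUnit_det_of_right_inverse right_inv, inv_eq_right_inv right_inv, right_inv, left_inv⟩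
end

section
/- Let F be a commutative ring and let A ∈ F^{m×s×n}, B ∈ F^{p×s×q}, C ∈ F^{u×s×v} be 3-hypermatrices with the same middle dimension s. Then the semi-tensor product of hypermatrices is associative: A ⊚ (B ⊚ C) = (A ⊚ B) ⊚ C, i.e. for every i ∈ {1,…,s} the i-th slice of A ⊚ (B ⊚ C) equals the i-th slice of (A ⊚ B) ⊚ C (identified via the canonical reindexing of index types). -/
open Matrix Kronecker

/-- The semi-tensor product of 3-hypermatrices (represented by their slices):
the `i`-th slice of `A ⊚ B` is `A_i ⋉ B_i`. -/
def hstp {F : Type*} [CommRing F] {m n p q s : ℕ}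
    (A : Fin s → Matrix (Fin m) (Fin n) F) (B : Fin s → Matrix (Fin p) (Fin q) F) :
    Fin s → Matrix (Fin (m * (Nat.lcm n p / n))) (Fin (q * (Nat.lcm n p / p))) F :=
  fun i => stp (A i) (B i)

/-! ### Auxiliary arithmetic lemmas -/

lemma stpLcmZeroSplit {a b : ℕ} (h : Nat.lcm a b = 0) : a = 0 ∨ b = 0 := by
  by_contra hc
  push_neg at hc
  exact Nat.lcm_ne_zero hc.1 hc.2 h

lemma stpKey0 (q u : ℕ) : (Nat.lcm q u / q) * Nat.lcm q u
    = Nat.lcm (Nat.lcm q u) ((Nat.lcm q u / q) * u) := by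
  calc (Nat.lcm q u / q) * Nat.lcm q u
      = Nat.lcm ((Nat.lcm q u / q) * q) ((Nat.lcm q u / q) * u) := (Nat.lcm_mul_left _ _ _).symm
    _ = Nat.lcm (Nat.lcm q u) ((Nat.lcm q u / q) * u) := by
        rw [Nat.div_mul_cancel (Nat.dvd_lcm_left q u)]

lemma stpKey1 (n p q u : ℕ) :
    Nat.lcm q u * Nat.lcm n (p * (Nat.lcm q u / q))
      = Nat.lcm (q * (Nat.lcm n p / p)) u * (p * (Nat.lcm q u / q)) := by
  have e1 : p * (Nat.lcm n p / p) = Nat.lcm n p := Nat.mul_div_cancel' (Nat.dvd_lcm_right n p)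
  have e2 : q * (Nat.lcm q u / q) = Nat.lcm q u := Nat.mul_div_cancel' (Nat.dvd_lcm_left q u)
  have h2 : Nat.lcm q u * (p * (Nat.lcm q u / q))
      = Nat.lcm (p * Nat.lcm q u) (p * (Nat.lcm q u / q) * u) := by
    calc Nat.lcm q u * (p * (Nat.lcm q u / q))
        = p * ((Nat.lcm q u / q) * Nat.lcm q u) := by ring
      _ = p * Nat.lcm (Nat.lcm q u) ((Nat.lcm q u / q) * u) := by rw [stpKey0]
      _ = Nat.lcm (p * Nat.lcm q u) (p * ((Nat.lcm q u / q) * u)) := by rw [Nat.lcm_mul_left]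
      _ = Nat.lcm (p * Nat.lcm q u) (p * (Nat.lcm q u / q) * u) := by rw [mul_assoc]
  have h3 : q * (Nat.lcm n p / p) * (p * (Nat.lcm q u / q)) = Nat.lcm n p * Nat.lcm q u := by
    calc q * (Nat.lcm n p / p) * (p * (Nat.lcm q u / q))
        = (p * (Nat.lcm n p / p)) * (q * (Nat.lcm q u / q)) := by ring
      _ = Nat.lcm n p * Nat.lcm q u := by rw [e1, e2]
  rw [← Nat.lcm_mul_left, h2, ← Nat.lcm_assoc]
  rw [mul_comm (Nat.lcm q u) n, Nat.lcm_mul_right]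
  conv_rhs => rw [← Nat.lcm_mul_right]
  rw [h3, mul_comm u (p * (Nat.lcm q u / q))]

lemma stpA1 (n p q u : ℕ) :
    Nat.lcm q u * (Nat.lcm n (p * (Nat.lcm q u / q)) / (p * (Nat.lcm q u / q)))
      = Nat.lcm (q * (Nat.lcm n p / p)) u := by
  rcases Nat.eq_zero_or_pos (p * (Nat.lcm q u / q)) with hp' | hp'
  · have hs2 : Nat.lcm (q * (Nat.lcm n p / p)) u = 0 := by
      rcases Nat.mul_eq_zero.mp hp' with hp | hq
      · subst hp
        simp [Nat.lcm_zero_right]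
      · have hc := Nat.mul_div_cancel' (Nat.dvd_lcm_left q u)
        rw [hq, Nat.mul_zero] at hc
        rcases stpLcmZeroSplit hc.symm with h | h
        · subst h; simp
        · subst h; simp [Nat.lcm_zero_right]
    rw [hp', hs2, Nat.lcm_zero_right]
    simp
  · have hk := stpKey1 n p q u
    have hd : p * (Nat.lcm q u / q) * (Nat.lcm n (p * (Nat.lcm q u / q)) / (p * (Nat.lcm q u / q)))
        = Nat.lcm n (p * (Nat.lcm q u / q)) :=
      Nat.mul_div_cancel' (Nat.dvd_lcm_right _ _)
    apply Nat.eq_of_mul_eq_mul_right hp'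
    calc Nat.lcm q u * (Nat.lcm n (p * (Nat.lcm q u / q)) / (p * (Nat.lcm q u / q)))
          * (p * (Nat.lcm q u / q))
        = Nat.lcm q u * (p * (Nat.lcm q u / q)
            * (Nat.lcm n (p * (Nat.lcm q u / q)) / (p * (Nat.lcm q u / q)))) := by ring
      _ = Nat.lcm q u * Nat.lcm n (p * (Nat.lcm q u / q)) := by rw [hd]
      _ = Nat.lcm (q * (Nat.lcm n p / p)) u * (p * (Nat.lcm q u / q)) := hk

lemma stpA2 (n p q u : ℕ) :
    Nat.lcm n p * (Nat.lcm (q * (Nat.lcm n p / p)) u / (q * (Nat.lcm n p / p)))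
      = Nat.lcm n (p * (Nat.lcm q u / q)) := by
  have h := stpA1 u q p n
  rw [Nat.lcm_comm p n] at h
  rw [Nat.lcm_comm u (q * (Nat.lcm n p / p))] at h
  rw [Nat.lcm_comm u q] at h
  rw [Nat.lcm_comm (p * (Nat.lcm q u / q)) n] at h
  exact h

/-! ### Entries of flattened Kronecker expansions -/

/-- Entry of the flattened `A ⊗ I_d`, as a function of natural number indices. -/
def exEnt {F : Type*} [CommRing F] {m n : ℕ} (d : ℕ) (A : Matrix (Fin m) (Fin n) F)
    (r c : ℕ) : F :=
  if h : r / d < m ∧ c / d < n then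
    (if r % d = c % d then A ⟨r / d, h.1⟩ ⟨c / d, h.2⟩ else 0) else 0

lemma exEnt_def {F : Type*} [CommRing F] {m n : ℕ} (d : ℕ) (A : Matrix (Fin m) (Fin n) F)
    (r c : ℕ) : exEnt d A r c =
    if h : r / d < m ∧ c / d < n then
      (if r % d = c % d then A ⟨r / d, h.1⟩ ⟨c / d, h.2⟩ else 0) else 0 := rfl

section Aux

variable {F : Type*} [CommRing F]

lemma stpAddMulInj {e x y s t : ℕ} (hx : x < e) (hy : y < e) :
    x + e * s = y + e * t ↔ x = y ∧ s = t := by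
  constructor
  · intro h
    have he : 0 < e := lt_of_le_of_lt (Nat.zero_le x) hx
    have h1 := congrArg (· % e) h
    simp only [Nat.add_mul_mod_self_left, Nat.mod_eq_of_lt hx, Nat.mod_eq_of_lt hy] at h1
    subst h1
    exact ⟨rfl, Nat.eq_of_mul_eq_mul_left he (Nat.add_left_cancel h)⟩
  · rintro ⟨rfl, rfl⟩; rfl

lemma exEnt_shift {m n b e : ℕ} (he : 0 < e) (A : Matrix (Fin m) (Fin n) F)
    {j : ℕ} (hj : j < e) (k l : ℕ) :
    exEnt (b * e) A k (j + e * l) = if j = k % e then exEnt b A (k / e) l else 0 := by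
  have hje : j % e = j := Nat.mod_eq_of_lt hj
  have h1 : (j + e * l) / (b * e) = l / b := by
    rw [mul_comm b e, ← Nat.div_div_eq_div_mul, Nat.add_mul_div_left _ _ he,
      Nat.div_eq_of_lt hj, Nat.zero_add]
  have h2 : k / (b * e) = k / e / b := by rw [mul_comm b e, ← Nat.div_div_eq_div_mul]
  have h3 : k % (b * e) = k % e + e * (k / e % b) := by rw [mul_comm b e, Nat.mod_mul]
  have h4 : (j + e * l) % (b * e) = j + e * (l % b) := by
    rw [mul_comm b e, Nat.mod_mul, Nat.add_mul_mod_self_left, hje,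
      Nat.add_mul_div_left _ _ he, Nat.div_eq_of_lt hj, Nat.zero_add]
  have hkm : k % e < e := Nat.mod_lt _ he
  unfold exEnt
  simp only [h1, h2, h3, h4]
  by_cases hd : j = k % e
  · subst hd
    rw [if_pos rfl]
    by_cases hc : k / e / b < m ∧ l / b < n
    · rw [dif_pos hc, dif_pos hc]
      have hiff : (k % e + e * (k / e % b) = k % e + e * (l % b)) ↔ (k / e % b = l % b) :=
        ⟨fun h => Nat.eq_of_mul_eq_mul_left he (Nat.add_left_cancel h), fun h => by rw [h]⟩
      by_cases hq : k / e % b = l % b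
      · rw [if_pos (hiff.mpr hq), if_pos hq]
      · rw [if_neg (fun hh => hq (hiff.mp hh)), if_neg hq]
    · rw [dif_neg hc, dif_neg hc]
  · rw [if_neg hd]
    by_cases hc : k / e / b < m ∧ l / b < n
    · rw [dif_pos hc, if_neg (fun hh => hd (((stpAddMulInj hkm hj).mp hh).1.symm))]
    · rw [dif_neg hc]

lemma exEnt_shift' {m n b e : ℕ} (he : 0 < e) (A : Matrix (Fin m) (Fin n) F)
    {j : ℕ} (hj : j < e) (l c : ℕ) :
    exEnt (b * e) A (j + e * l) c = if j = c % e then exEnt b A l (c / e) else 0 := by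
  have hje : j % e = j := Nat.mod_eq_of_lt hj
  have h1 : (j + e * l) / (b * e) = l / b := by
    rw [mul_comm b e, ← Nat.div_div_eq_div_mul, Nat.add_mul_div_left _ _ he,
      Nat.div_eq_of_lt hj, Nat.zero_add]
  have h2 : c / (b * e) = c / e / b := by rw [mul_comm b e, ← Nat.div_div_eq_div_mul]
  have h3 : c % (b * e) = c % e + e * (c / e % b) := by rw [mul_comm b e, Nat.mod_mul]
  have h4 : (j + e * l) % (b * e) = j + e * (l % b) := by
    rw [mul_comm b e, Nat.mod_mul, Nat.add_mul_mod_self_left, hje,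
      Nat.add_mul_div_left _ _ he, Nat.div_eq_of_lt hj, Nat.zero_add]
  have hkm : c % e < e := Nat.mod_lt _ he
  unfold exEnt
  simp only [h1, h2, h3, h4]
  by_cases hd : j = c % e
  · subst hd
    rw [if_pos rfl]
    by_cases hc : l / b < m ∧ c / e / b < n
    · rw [dif_pos hc, dif_pos hc]
      have hiff : (c % e + e * (l % b) = c % e + e * (c / e % b)) ↔ (l % b = c / e % b) :=
        ⟨fun h => Nat.eq_of_mul_eq_mul_left he (Nat.add_left_cancel h), fun h => by rw [h]⟩
      by_cases hq : l % b = c / e % b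
      · rw [if_pos (hiff.mpr hq), if_pos hq]
      · rw [if_neg (fun hh => hq (hiff.mp hh)), if_neg hq]
    · rw [dif_neg hc, dif_neg hc]
  · rw [if_neg hd]
    by_cases hc : l / b < m ∧ c / e / b < n
    · rw [dif_pos hc, if_neg (fun hh => hd (((stpAddMulInj hj hkm).mp hh).1))]
    · rw [dif_neg hc]

lemma stpSumRangeMul (f : ℕ → F) (a b : ℕ) :
    ∑ k ∈ Finset.range (a * b), f k
      = ∑ l ∈ Finset.range a, ∑ j ∈ Finset.range b, f (j + b * l) := by
  calc ∑ k ∈ Finset.range (a * b), f k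
      = ∑ k : Fin (a * b), f ↑k := (Fin.sum_univ_eq_sum_range f _).symm
    _ = ∑ x : Fin a × Fin b, f ↑(finProdFinEquiv x) :=
        (Equiv.sum_comp finProdFinEquiv (fun k : Fin (a * b) => f ↑k)).symm
    _ = ∑ l : Fin a, ∑ j : Fin b, f (↑j + b * ↑l) := by
        rw [Fintype.sum_prod_type]
        exact Finset.sum_congr rfl fun x _ => Finset.sum_congr rfl fun y _ => rfl
    _ = ∑ l ∈ Finset.range a, ∑ j ∈ Finset.range b, f (j + b * l) := by
        rw [← Fin.sum_univ_eq_sum_range (fun l => ∑ j ∈ Finset.range b, f (j + b * l)) a]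
        exact Finset.sum_congr rfl fun l _ =>
          Fin.sum_univ_eq_sum_range (fun j => f (j + b * ↑l)) b

lemma stpKronOneApply {m n d : ℕ} (A : Matrix (Fin m) (Fin n) F)
    (r : Fin (m * d)) (c : Fin (n * d)) :
    (A ⊗ₖ (1 : Matrix (Fin d) (Fin d) F)) (finProdFinEquiv.symm r) (finProdFinEquiv.symm c)
      = exEnt d A ↑r ↑c := by
  have hd : 0 < d := by
    rcases Nat.eq_zero_or_pos d with h | h
    · exact absurd r.isLt (by simp [h])
    · exact h
  have hm : (r : ℕ) / d < m := (Nat.div_lt_iff_lt_mul hd).mpr r.isLt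
  have hn : (c : ℕ) / d < n := (Nat.div_lt_iff_lt_mul hd).mpr c.isLt
  unfold exEnt
  rw [dif_pos ⟨hm, hn⟩, Matrix.kronecker_apply, Matrix.one_apply]
  by_cases hmod : (r : ℕ) % d = (c : ℕ) % d
  · rw [if_pos hmod,
      if_pos (Fin.ext hmod : (finProdFinEquiv.symm r).2 = (finProdFinEquiv.symm c).2), mul_one]
    rfl
  · rw [if_neg hmod, if_neg (fun hh : _ = _ => hmod (congrArg Fin.val hh)), mul_zero]

lemma stp_apply {m n p q : ℕ} (A : Matrix (Fin m) (Fin n) F) (B : Matrix (Fin p) (Fin q) F)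
    (r : Fin (m * (Nat.lcm n p / n))) (c : Fin (q * (Nat.lcm n p / p))) :
    stp A B r c = ∑ k ∈ Finset.range (Nat.lcm n p),
      exEnt (Nat.lcm n p / n) A ↑r k * exEnt (Nat.lcm n p / p) B k ↑c := by
  unfold stp
  rw [Matrix.mul_apply, ← Fin.sum_univ_eq_sum_range
    (fun k => exEnt (Nat.lcm n p / n) A ↑r k * exEnt (Nat.lcm n p / p) B k ↑c) (Nat.lcm n p)]
  apply Finset.sum_congr rfl
  intro k _
  rw [Matrix.reindex_apply, Matrix.reindex_apply, Matrix.submatrix_apply, Matrix.submatrix_apply,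
    Equiv.symm_trans_apply, Equiv.symm_trans_apply, stpKronOneApply, stpKronOneApply]
  simp

lemma stpC1 {p q u v : ℕ} (b₁ b₂ e t1 : ℕ) (he : 0 < e)
    (B : Matrix (Fin p) (Fin q) F) (C : Matrix (Fin u) (Fin v) F) (k c : ℕ) :
    (if k % e = c % e then
      ∑ l ∈ Finset.range t1, exEnt b₁ B (k / e) l * exEnt b₂ C l (c / e) else 0)
    = ∑ k2 ∈ Finset.range (t1 * e), exEnt (b₁ * e) B k k2 * exEnt (b₂ * e) C k2 c := by
  rw [stpSumRangeMul (fun k2 => exEnt (b₁ * e) B k k2 * exEnt (b₂ * e) C k2 c) t1 e]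
  have hstep : ∀ l ∈ Finset.range t1,
      ∑ j ∈ Finset.range e, exEnt (b₁ * e) B k (j + e * l) * exEnt (b₂ * e) C (j + e * l) c
        = if k % e = c % e then exEnt b₁ B (k / e) l * exEnt b₂ C l (c / e) else 0 := by
    intro l _
    have hterm : ∀ j ∈ Finset.range e,
        exEnt (b₁ * e) B k (j + e * l) * exEnt (b₂ * e) C (j + e * l) c
          = if j = k % e then
              (if (k % e) = c % e then exEnt b₁ B (k / e) l * exEnt b₂ C l (c / e) else 0)
            else 0 := by
      intro j hj
      rw [exEnt_shift he B (Finset.mem_range.mp hj), exEnt_shift' he C (Finset.mem_range.mp hj)]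
      by_cases h1 : j = k % e
      · subst h1
        by_cases h2 : (k % e) = c % e <;> simp [h2]
      · simp [h1]
    rw [Finset.sum_congr rfl hterm, Finset.sum_ite_eq' (Finset.range e) (k % e)
      (fun _ => if (k % e) = c % e then exEnt b₁ B (k / e) l * exEnt b₂ C l (c / e) else 0),
      if_pos (Finset.mem_range.mpr (Nat.mod_lt _ he))]
  rw [Finset.sum_congr rfl hstep]
  by_cases hc : k % e = c % e <;> simp [hc]

lemma exEnt_stp {p q u v : ℕ} (B : Matrix (Fin p) (Fin q) F) (C : Matrix (Fin u) (Fin v) F)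
    {e : ℕ} (he : 0 < e) (k c : ℕ)
    (hk : k < p * (Nat.lcm q u / q) * e) (hc : c < v * (Nat.lcm q u / u) * e) :
    exEnt e (stp B C) k c
      = ∑ k2 ∈ Finset.range (Nat.lcm q u * e),
          exEnt (Nat.lcm q u / q * e) B k k2 * exEnt (Nat.lcm q u / u * e) C k2 c := by
  rw [← stpC1 (Nat.lcm q u / q) (Nat.lcm q u / u) e (Nat.lcm q u) he B C k c]
  conv_lhs => rw [exEnt_def]
  rw [dif_pos ⟨(Nat.div_lt_iff_lt_mul he).mpr hk, (Nat.div_lt_iff_lt_mul he).mpr hc⟩]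
  by_cases hm : k % e = c % e
  · rw [if_pos hm, if_pos hm, stp_apply]
  · rw [if_neg hm, if_neg hm]

lemma stpPosSplit {a b : ℕ} (h : 0 < a * b) : 0 < a ∧ 0 < b := by
  constructor
  · rcases Nat.eq_zero_or_pos a with h0 | h0
    · rw [h0, Nat.zero_mul] at h; exact absurd h (lt_irrefl 0)
    · exact h0
  · rcases Nat.eq_zero_or_pos b with h0 | h0
    · rw [h0, Nat.mul_zero] at h; exact absurd h (lt_irrefl 0)
    · exact h0

end Aux

/-- Associativity of the semi-tensor product of 3-hypermatrices with the same
middle dimension `s`: for every `i`, the `i`-th slice of `A ⊚ (B ⊚ C)` equals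
the `i`-th slice of `(A ⊚ B) ⊚ C`, identified via the canonical reindexing
(`finCongr`) of their (numerically equal) dimensions. -/
theorem hstp_assoc {F : Type*} [CommRing F] {m n p q u v s : ℕ}
    (A : Fin s → Matrix (Fin m) (Fin n) F) (B : Fin s → Matrix (Fin p) (Fin q) F)
    (C : Fin s → Matrix (Fin u) (Fin v) F) :
    ∃ (h₁ : m * (Nat.lcm n (p * (Nat.lcm q u / q)) / n)
          = m * (Nat.lcm n p / n) * (Nat.lcm (q * (Nat.lcm n p / p)) u / (q * (Nat.lcm n p / p))))
      (h₂ : v * (Nat.lcm q u / u) * (Nat.lcm n (p * (Nat.lcm q u / q)) / (p * (Nat.lcm q u / q)))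
          = v * (Nat.lcm (q * (Nat.lcm n p / p)) u / u)),
      ∀ i : Fin s,
        Matrix.reindex (finCongr h₁) (finCongr h₂) (hstp A (hstp B C) i)
          = hstp (hstp A B) C i := by
  have hA1 := stpA1 n p q u
  have hA2 := stpA2 n p q u
  have h₁ : m * (Nat.lcm n (p * (Nat.lcm q u / q)) / n)
      = m * (Nat.lcm n p / n) * (Nat.lcm (q * (Nat.lcm n p / p)) u / (q * (Nat.lcm n p / p))) := by
    rcases Nat.eq_zero_or_pos n with hn | hn
    · subst hn; simp
    · rw [mul_assoc]
      congr 1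
      apply Nat.eq_of_mul_eq_mul_left hn
      rw [Nat.mul_div_cancel' (Nat.dvd_lcm_left n (p * (Nat.lcm q u / q))), ← mul_assoc,
        Nat.mul_div_cancel' (Nat.dvd_lcm_left n p), hA2]
  have h₂ : v * (Nat.lcm q u / u) * (Nat.lcm n (p * (Nat.lcm q u / q)) / (p * (Nat.lcm q u / q)))
      = v * (Nat.lcm (q * (Nat.lcm n p / p)) u / u) := by
    rcases Nat.eq_zero_or_pos u with hu | hu
    · subst hu; simp [Nat.lcm_zero_right]
    · rw [mul_assoc]
      congr 1
      apply Nat.eq_of_mul_eq_mul_left hu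
      rw [Nat.mul_div_cancel' (Nat.dvd_lcm_right (q * (Nat.lcm n p / p)) u), ← mul_assoc,
        Nat.mul_div_cancel' (Nat.dvd_lcm_right q u), hA1]
  refine ⟨h₁, h₂, fun i => ?_⟩
  ext r c
  rw [Matrix.reindex_apply, Matrix.submatrix_apply]
  show stp (A i) (stp (B i) (C i)) ((finCongr h₁).symm r) ((finCongr h₂).symm c)
      = stp (stp (A i) (B i)) (C i) r c
  -- positivity facts
  obtain ⟨hm0, hsq⟩ := stpPosSplit r.pos
  obtain ⟨hmpos, hs1n⟩ := stpPosSplit hm0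
  obtain ⟨hvpos, hs2u⟩ := stpPosSplit c.pos
  have hs2 : 0 < Nat.lcm (q * (Nat.lcm n p / p)) u :=
    Nat.pos_of_ne_zero fun h => by rw [h] at hs2u; simp at hs2u
  have hq' : 0 < q * (Nat.lcm n p / p) :=
    Nat.pos_of_ne_zero fun h => by rw [h] at hs2; simp at hs2
  have hu : 0 < u :=
    Nat.pos_of_ne_zero fun h => by rw [h, Nat.lcm_zero_right] at hs2; exact absurd hs2 (lt_irrefl 0)
  obtain ⟨hq, hs1p⟩ := stpPosSplit hq'
  have hs1 : 0 < Nat.lcm n p :=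
    Nat.pos_of_ne_zero fun h => by rw [h] at hs1n; simp at hs1n
  have hn : 0 < n :=
    Nat.pos_of_ne_zero fun h => by rw [h] at hs1; simp at hs1
  have hp : 0 < p :=
    Nat.pos_of_ne_zero fun h => by rw [h, Nat.lcm_zero_right] at hs1; exact absurd hs1 (lt_irrefl 0)
  have ht1 : 0 < Nat.lcm q u := Nat.lcm_pos hq hu
  have ht1q : 0 < Nat.lcm q u / q :=
    Nat.div_pos (Nat.le_of_dvd ht1 (Nat.dvd_lcm_left q u)) hq
  have ht1u : 0 < Nat.lcm q u / u :=
    Nat.div_pos (Nat.le_of_dvd ht1 (Nat.dvd_lcm_right q u)) hu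
  have hp' : 0 < p * (Nat.lcm q u / q) := Nat.mul_pos hp ht1q
  have ht2 : 0 < Nat.lcm n (p * (Nat.lcm q u / q)) := Nat.lcm_pos hn hp'
  have he2 : 0 < Nat.lcm n (p * (Nat.lcm q u / q)) / (p * (Nat.lcm q u / q)) :=
    Nat.div_pos (Nat.le_of_dvd ht2 (Nat.dvd_lcm_right _ _)) hp'
  -- useful cancellation facts
  have hcp' : p * (Nat.lcm q u / q)
      * (Nat.lcm n (p * (Nat.lcm q u / q)) / (p * (Nat.lcm q u / q)))
      = Nat.lcm n (p * (Nat.lcm q u / q)) := Nat.mul_div_cancel' (Nat.dvd_lcm_right _ _)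
  have hcq' : q * (Nat.lcm n p / p) * (Nat.lcm (q * (Nat.lcm n p / p)) u / (q * (Nat.lcm n p / p)))
      = Nat.lcm (q * (Nat.lcm n p / p)) u := Nat.mul_div_cancel' (Nat.dvd_lcm_left _ _)
  -- expand both sides
  rw [stp_apply, stp_apply]
  simp only [finCongr_symm, finCongr_apply, Fin.coe_cast]
  have hL : ∑ k ∈ Finset.range (Nat.lcm n (p * (Nat.lcm q u / q))),
        exEnt (Nat.lcm n (p * (Nat.lcm q u / q)) / n) (A i) ↑r k
          * exEnt (Nat.lcm n (p * (Nat.lcm q u / q)) / (p * (Nat.lcm q u / q)))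
              (stp (B i) (C i)) k ↑c
      = ∑ k ∈ Finset.range (Nat.lcm n (p * (Nat.lcm q u / q))),
          exEnt (Nat.lcm n (p * (Nat.lcm q u / q)) / n) (A i) ↑r k
            * ∑ k2 ∈ Finset.range (Nat.lcm q u
                * (Nat.lcm n (p * (Nat.lcm q u / q)) / (p * (Nat.lcm q u / q)))),
                exEnt (Nat.lcm q u / q
                    * (Nat.lcm n (p * (Nat.lcm q u / q)) / (p * (Nat.lcm q u / q)))) (B i) k k2
                  * exEnt (Nat.lcm q u / u
                      * (Nat.lcm n (p * (Nat.lcm q u / q)) / (p * (Nat.lcm q u / q)))) (C i) k2 ↑c := by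
    refine Finset.sum_congr rfl fun k hk => ?_
    congr 1
    refine exEnt_stp (B i) (C i) he2 k ↑c ?_ ?_
    · rw [hcp']
      exact Finset.mem_range.mp hk
    · rw [h₂]
      exact c.isLt
  rw [hL]
  have hR : ∑ k ∈ Finset.range (Nat.lcm (q * (Nat.lcm n p / p)) u),
        exEnt (Nat.lcm (q * (Nat.lcm n p / p)) u / (q * (Nat.lcm n p / p)))
            (stp (A i) (B i)) ↑r k
          * exEnt (Nat.lcm (q * (Nat.lcm n p / p)) u / u) (C i) k ↑c
      = ∑ k ∈ Finset.range (Nat.lcm (q * (Nat.lcm n p / p)) u),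
          (∑ k2 ∈ Finset.range (Nat.lcm n p
              * (Nat.lcm (q * (Nat.lcm n p / p)) u / (q * (Nat.lcm n p / p)))),
              exEnt (Nat.lcm n p / n
                  * (Nat.lcm (q * (Nat.lcm n p / p)) u / (q * (Nat.lcm n p / p)))) (A i) ↑r k2
                * exEnt (Nat.lcm n p / p
                    * (Nat.lcm (q * (Nat.lcm n p / p)) u / (q * (Nat.lcm n p / p)))) (B i) k2 k)
            * exEnt (Nat.lcm (q * (Nat.lcm n p / p)) u / u) (C i) k ↑c := by
    refine Finset.sum_congr rfl fun k hk => ?_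
    congr 1
    refine exEnt_stp (A i) (B i) hsq ↑r k ?_ ?_
    · exact r.isLt
    · rw [hcq']
      exact Finset.mem_range.mp hk
  rw [hR]
  -- now identify ranges and block sizes
  have hr1 : Nat.lcm q u * (Nat.lcm n (p * (Nat.lcm q u / q)) / (p * (Nat.lcm q u / q)))
      = Nat.lcm (q * (Nat.lcm n p / p)) u := hA1
  have hr2 : Nat.lcm q u / u * (Nat.lcm n (p * (Nat.lcm q u / q)) / (p * (Nat.lcm q u / q)))
      = Nat.lcm (q * (Nat.lcm n p / p)) u / u := by
    apply Nat.eq_of_mul_eq_mul_left hu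
    rw [← mul_assoc, Nat.mul_div_cancel' (Nat.dvd_lcm_right q u), hA1,
      Nat.mul_div_cancel' (Nat.dvd_lcm_right _ _)]
  have hr3 : Nat.lcm n p * (Nat.lcm (q * (Nat.lcm n p / p)) u / (q * (Nat.lcm n p / p)))
      = Nat.lcm n (p * (Nat.lcm q u / q)) := hA2
  have hr4 : Nat.lcm n p / n * (Nat.lcm (q * (Nat.lcm n p / p)) u / (q * (Nat.lcm n p / p)))
      = Nat.lcm n (p * (Nat.lcm q u / q)) / n := by
    apply Nat.eq_of_mul_eq_mul_left hn
    rw [← mul_assoc, Nat.mul_div_cancel' (Nat.dvd_lcm_left n p), hA2,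
      Nat.mul_div_cancel' (Nat.dvd_lcm_left _ _)]
  have hr5 : Nat.lcm n p / p * (Nat.lcm (q * (Nat.lcm n p / p)) u / (q * (Nat.lcm n p / p)))
      = Nat.lcm q u / q * (Nat.lcm n (p * (Nat.lcm q u / q)) / (p * (Nat.lcm q u / q))) := by
    apply Nat.eq_of_mul_eq_mul_left hq
    rw [← mul_assoc, ← mul_assoc, hcq', Nat.mul_div_cancel' (Nat.dvd_lcm_left q u), hA1]
  rw [hr1, hr2, hr3, hr4, hr5]
  simp only [Finset.mul_sum, Finset.sum_mul]
  rw [Finset.sum_comm]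
  exact Finset.sum_congr rfl fun k _ => Finset.sum_congr rfl fun k2 _ => (mul_assoc _ _ _).symm
end

section
/- Let F be a field of characteristic zero, let d ≥ 2 be an even natural number, and let A : (Fin d → Fin n) → F be a d-hypercubic of dimension n. Then cdet(A) = ddet(A), i.e. (1/n!) Σ_{σ_1,…,σ_d ∈ S_n} (∏_{j=1}^{d} sgn σ_j) (∏_{i=1}^{n} A(σ_1(i),…,σ_d(i))) = Σ_{τ_1,…,τ_{d-1} ∈ S_n} (∏_{j=1}^{d-1} sgn τ_j) (∏_{i=1}^{n} A(i, τ_1(i),…,τ_{d-1}(i))). -/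
/-! Right-multiplying all `d` permutations of a summand of `cdet` by a common `π` multiplies
its sign by `sign π ^ d = 1` (as `d` is even) and only reindexes the product over `i` by `π`.
So we may normalize `σ₁ = 1`: the sum over `σ₁` becomes a factor `n!`, cancelling `1/n!`,
and what remains is `ddet`. -/

open Finset

/-- The combinatorial hyperdeterminant of a `d`-hypercubic of dimension `n`:
`cdet A = (1/n!) Σ_{σ₁,…,σ_d ∈ S_n} (∏ⱼ sgn σⱼ)(∏ᵢ A(σ₁(i),…,σ_d(i)))`. -/
noncomputable def cdet {F : Type*} [Field F] {n d : ℕ} (A : (Fin d → Fin n) → F) : F :=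
  (Nat.factorial n : F)⁻¹ *
    ∑ σ : Fin d → Equiv.Perm (Fin n),
      (∏ j, ((Equiv.Perm.sign (σ j) : ℤ) : F)) * ∏ i, A fun j => σ j i

/-- The modified combinatorial hyperdeterminant of a `d`-hypercubic (`d ≥ 2`):
`ddet A = Σ_{τ₁,…,τ_{d-1} ∈ S_n} (∏ⱼ sgn τⱼ)(∏ᵢ A(i, τ₁(i),…,τ_{d-1}(i)))`. -/
def ddet {F : Type*} [Field F] {n d : ℕ} (A : (Fin d → Fin n) → F) : F :=
  ∑ τ : Fin (d - 1) → Equiv.Perm (Fin n),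
    (∏ j, ((Equiv.Perm.sign (τ j) : ℤ) : F)) *
      ∏ i, A fun j : Fin d =>
        if h : (j : ℕ) = 0 then i
        else τ ⟨(j : ℕ) - 1, by have := j.isLt; omega⟩ i

open Equiv

def cdetSummand {F : Type*} [Field F] {n d : ℕ} (A : (Fin d → Fin n) → F)
    (σ : Fin d → Perm (Fin n)) : F :=
  (∏ j, ((Perm.sign (σ j) : ℤ) : F)) * ∏ i, A fun j => σ j i

theorem cdet_eq_inv_factorial_mul_sum_cdetSummand {F : Type*} [Field F] {n d : ℕ}
    (A : (Fin d → Fin n) → F) :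
    cdet A = (n.factorial : F)⁻¹ * ∑ σ, cdetSummand A σ :=
  rfl

theorem ddet_eq_sum_cdetSummand_cons_one {F : Type*} [Field F] {n m : ℕ}
    (A : (Fin (m + 1) → Fin n) → F) :
    ddet A = ∑ τ : Fin m → Perm (Fin n), cdetSummand A (Fin.cons 1 τ) := by
  refine sum_congr rfl fun τ _ => ?_
  rw [cdetSummand, Fin.prod_univ_succ]
  simp only [Fin.cons_zero, Fin.cons_succ, map_one, Units.val_one, Int.cast_one, one_mul]
  congr 1
  refine prod_congr rfl fun i _ => congrArg A (funext fun j => ?_)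
  cases j using Fin.cases <;> simp

theorem prod_sign_mul_right_of_even {ι α : Type*} [Fintype ι] [Fintype α] [DecidableEq α]
    (hι : Even (Fintype.card ι)) (σ : ι → Perm α) (π : Perm α) :
    ∏ j, Perm.sign (σ j * π) = ∏ j, Perm.sign (σ j) := by
  obtain ⟨k, hk⟩ := hι
  simp only [map_mul, prod_mul_distrib, prod_const, card_univ, hk, ← two_mul, pow_mul,
    Int.units_sq, one_pow, mul_one]

theorem cdetSummand_mul_right_of_even {F : Type*} [Field F] {n d : ℕ} (hd : Even d)
    (A : (Fin d → Fin n) → F) (σ : Fin d → Perm (Fin n)) (π : Perm (Fin n)) :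
    cdetSummand A (fun j => σ j * π) = cdetSummand A σ := by
  have hsign := prod_sign_mul_right_of_even (by rwa [Fintype.card_fin]) σ π
  rw [cdetSummand, cdetSummand, ← Int.cast_prod, ← Int.cast_prod, ← Units.coe_prod,
    ← Units.coe_prod, hsign]
  congr 1
  exact prod_comp π fun i => A fun j => σ j i

/-- Every tuple is uniquely `Fin.cons g (τ * g)`, and invariance turns this into
`Fin.cons 1 τ`. -/
theorem sum_eq_card_smul_sum_cons_one_of_mul_right_invariant {G M : Type*} [Group G]
    [Fintype G] [AddCommMonoid M] {m : ℕ} (f : (Fin (m + 1) → G) → M)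
    (hf : ∀ σ g, f (fun j => σ j * g) = f σ) :
    ∑ σ, f σ = Fintype.card G • ∑ τ : Fin m → G, f (Fin.cons 1 τ) := by
  rw [← (Fin.consEquiv fun _ => G).sum_comp, Fintype.sum_prod_type, ← card_univ,
    ← sum_const]
  refine sum_congr rfl fun g _ => ?_
  rw [← (Equiv.piCongrRight fun _ => Equiv.mulRight g).sum_comp]
  refine sum_congr rfl fun τ _ => ?_
  rw [← hf (Fin.cons 1 τ) g]
  congr 1
  funext j
  cases j using Fin.cases <;> simp [Fin.consEquiv]

/-- For an even order `d ≥ 2`, the combinatorial hyperdeterminant coincides with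
the modified combinatorial hyperdeterminant: `cdet A = ddet A`. -/
theorem cdet_eq_ddet_of_even {F : Type*} [Field F] [CharZero F] {n d : ℕ}
    (hd2 : 2 ≤ d) (hd : Even d) (A : (Fin d → Fin n) → F) :
    cdet A = ddet A := by
  obtain ⟨m, rfl⟩ : ∃ m, d = m + 1 := ⟨d - 1, by omega⟩
  rw [cdet_eq_inv_factorial_mul_sum_cdetSummand,
    sum_eq_card_smul_sum_cons_one_of_mul_right_invariant _ (cdetSummand_mul_right_of_even hd A),
    Fintype.card_perm, Fintype.card_fin, nsmul_eq_mul,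
    inv_mul_cancel_left₀ (Nat.cast_ne_zero.mpr n.factorial_ne_zero),
    ddet_eq_sum_cdetSummand_cons_one]
end

section
/- Let F be a field of characteristic zero, let d be an odd natural number, let n ≥ 2, and let A : (Fin d → Fin n) → F be a d-hypercubic of dimension n. Then the combinatorial hyperdeterminant of A vanishes identically: cdet(A) = 0. -/
/-!
Right-multiplying every `σⱼ` by a fixed transposition `τ` permutes the terms of the defining sum:
it leaves each product `∏ᵢ A(σ₁(i),…,σ_d(i))` unchanged (the factors are only reindexed by `τ`)
and multiplies the sign weight by `(sgn τ)^d = -1` for odd `d`. So the sum equals its own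
negative, hence vanishes in characteristic zero.
-/

open Finset

open Equiv

namespace Hyperdeterminant

variable {R : Type*} [CommRing R] {ι κ : Type*} [Fintype ι] [DecidableEq ι]
  [Fintype κ] [DecidableEq κ]

def cdetSum (A : (κ → ι) → R) : R :=
  ∑ σ : κ → Perm ι, (∏ j, ((Perm.sign (σ j) : ℤ) : R)) * ∏ i, A fun j => σ j i

theorem cdetSum_eq_sign_pow_mul (A : (κ → ι) → R) (τ : Perm ι) :
    cdetSum A = ((Perm.sign τ : ℤ) : R) ^ Fintype.card κ * cdetSum A := by
  have hterm : ∀ σ : κ → Perm ι,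
      (∏ j, ((Perm.sign (σ j * τ) : ℤ) : R)) * ∏ i, A (fun j => (σ j * τ) i) =
        ((Perm.sign τ : ℤ) : R) ^ Fintype.card κ *
          ((∏ j, ((Perm.sign (σ j) : ℤ) : R)) * ∏ i, A fun j => σ j i) := by
    intro σ
    have hsign : ∏ j, ((Perm.sign (σ j * τ) : ℤ) : R) =
        ((Perm.sign τ : ℤ) : R) ^ Fintype.card κ * ∏ j, ((Perm.sign (σ j) : ℤ) : R) := by
      simp only [map_mul, Units.val_mul, Int.cast_mul, prod_mul_distrib, prod_const, card_univ]
      ring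
    have hprod : ∏ i, A (fun j => (σ j * τ) i) = ∏ i, A fun j => σ j i :=
      Equiv.prod_comp τ fun i => A fun j => σ j i
    rw [hsign, hprod, mul_assoc]
  calc cdetSum A
      = ∑ σ : κ → Perm ι, (∏ j, ((Perm.sign (σ j * τ) : ℤ) : R)) *
          ∏ i, A (fun j => (σ j * τ) i) :=
        (Equiv.sum_comp (Equiv.piCongrRight fun _ => Equiv.mulRight τ)
          fun σ => (∏ j, ((Perm.sign (σ j) : ℤ) : R)) * ∏ i, A fun j => σ j i).symm
    _ = _ := by simp only [hterm, ← mul_sum, cdetSum]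

theorem cdetSum_eq_zero_of_odd [NoZeroDivisors R] [CharZero R]
    (hι : 1 < Fintype.card ι) (hκ : Odd (Fintype.card κ)) (A : (κ → ι) → R) :
    cdetSum A = 0 := by
  obtain ⟨a, b, hab⟩ := Fintype.exists_pair_of_one_lt_card hι
  have h := cdetSum_eq_sign_pow_mul A (swap a b)
  rw [Perm.sign_swap hab, Units.val_neg, Units.val_one, Int.cast_neg, Int.cast_one,
    hκ.neg_one_pow, neg_one_mul] at h
  exact CharZero.eq_neg_self_iff.mp h

end Hyperdeterminant

/-- For an odd order `d` and dimension `n ≥ 2`, the combinatorial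
hyperdeterminant of a `d`-hypercubic vanishes identically: `cdet A = 0`. -/
theorem cdet_eq_zero_of_odd {F : Type*} [Field F] [CharZero F] {n d : ℕ}
    (hn : 2 ≤ n) (hd : Odd d) (A : (Fin d → Fin n) → F) :
    cdet A = 0 := by
  have hsum : Hyperdeterminant.cdetSum A = 0 :=
    Hyperdeterminant.cdetSum_eq_zero_of_odd (by rw [Fintype.card_fin]; omega) (by simpa using hd) A
  rw [cdet, ← Hyperdeterminant.cdetSum, hsum, mul_zero]
end

section
/- (Cauchy–Binet formula for compound matrices.) Let F be a commutative ring, A an n×m matrix and B an m×p matrix over F, and let k be a positive integer with k ≤ min(n,m,p). Then (AB)^{(k)} = A^{(k)} B^{(k)}, i.e. for all k-element subsets α ⊆ {1,…,n} and γ ⊆ {1,…,p}, det((AB)[α,γ]) = Σ_{β ⊆ {1,…,m}, |β| = k} det(A[α,β]) det(B[β,γ]). -/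
/-!
Expanding `det (M * N)` multilinearly in the rows of `M * N = (∑ⱼ M i j • N j)ᵢ` writes it as a
sum over maps `f : Fin k → κ` of `(∏ i, M i (f i)) * det (N.submatrix f id)`, where only injective
`f` survive. An injective `f` is uniquely `S.orderEmbOfFin ∘ σ` with `S` its image and
`σ : Fin k ↪ Fin k`. For fixed `S`, the sum over `σ` is the same expansion applied to the square
minors `M[·, S]` and `N[S, ·]`, hence equals `det (M[·, S] * N[S, ·]) = det M[·, S] * det N[S, ·]`.
-/

open Matrix Finset

/-- The `k`-th multiplicative compound of an `n × m` matrix `A`: the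
`C(n,k) × C(m,k)` matrix indexed by the `k`-element subsets of the row and
column index sets, whose `(α, β)` entry is the `k × k` minor `det A[α, β]`
(rows `α` and columns `β` taken in increasing order). -/
def compound {F : Type*} [CommRing F] {n m : ℕ} (A : Matrix (Fin n) (Fin m) F) (k : ℕ) :
    Matrix {S : Finset (Fin n) // S.card = k} {T : Finset (Fin m) // T.card = k} F :=
  Matrix.of fun S T =>
    (A.submatrix (S.1.orderEmbOfFin S.2) (T.1.orderEmbOfFin T.2)).det

namespace Finset

theorem bijective_trans_orderEmbOfFin {κ : Type*} [Fintype κ] [LinearOrder κ] (k : ℕ) :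
    Function.Bijective fun q : {S : Finset κ // S.card = k} × (Fin k ↪ Fin k) =>
      q.2.trans (q.1.1.orderEmbOfFin q.1.2).toEmbedding := by
  refine (Fintype.bijective_iff_injective_and_card _).mpr ⟨?_, ?_⟩
  · rintro ⟨S, σ⟩ ⟨T, τ⟩ h
    dsimp only at h
    have hrange : ∀ (S : {S : Finset κ // S.card = k}) (σ : Fin k ↪ Fin k),
        Set.range (σ.trans (S.1.orderEmbOfFin S.2).toEmbedding) = S.1 := by
      intro S σ
      rw [Function.Embedding.coe_trans, Set.range_comp,
        (Finite.injective_iff_surjective.mp σ.injective).range_eq, Set.image_univ]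
      exact range_orderEmbOfFin S.1 S.2
    obtain rfl : S = T :=
      Subtype.ext (coe_injective ((hrange S σ).symm.trans (by rw [h]; exact hrange T τ)))
    exact Prod.ext rfl (Function.Embedding.ext fun i =>
      (S.1.orderEmbOfFin S.2).injective (DFunLike.congr_fun h i))
  · simp only [Fintype.card_prod, Fintype.card_finset_len, Fintype.card_embedding_eq,
      Fintype.card_fin, Nat.descFactorial_self, Nat.descFactorial_eq_factorial_mul_choose,
      mul_comm]

end Finset

namespace Matrix

variable {R : Type*} [CommRing R]

theorem det_mul_eq_sum_pi {ι κ : Type*} [Fintype ι] [DecidableEq ι] [Fintype κ]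
    (M : Matrix ι κ R) (N : Matrix κ ι R) :
    (M * N).det = ∑ f : ι → κ, (∏ i, M i (f i)) * (N.submatrix f id).det := by
  have hrows : M * N = Matrix.of fun i => ∑ j, M i j • N j := by
    ext i j
    simp [mul_apply]
  rw [hrows]
  change detRowAlternating (fun i => ∑ j, M i j • N j) = _
  rw [← AlternatingMap.coe_multilinearMap, MultilinearMap.map_sum]
  refine sum_congr rfl fun f _ => ?_
  exact (detRowAlternating.map_smul_univ (fun i => M i (f i)) (fun i => N (f i))).trans rfl

theorem det_mul_eq_sum_embedding {ι κ : Type*} [Fintype ι] [DecidableEq ι] [Fintype κ]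
    [DecidableEq κ] (M : Matrix ι κ R) (N : Matrix κ ι R) :
    (M * N).det = ∑ f : ι ↪ κ, (∏ i, M i (f i)) * (N.submatrix f id).det := by
  set term : (ι → κ) → R := fun f => (∏ i, M i (f i)) * (N.submatrix f id).det
  have hinj : ∑ f : ι ↪ κ, term f = ∑ f ∈ univ.map ⟨_, DFunLike.coe_injective⟩, term f :=
    (sum_map univ ⟨_, DFunLike.coe_injective⟩ term).symm
  rw [det_mul_eq_sum_pi, hinj]
  refine (sum_subset (subset_univ _) fun f _ hf => ?_).symm
  obtain ⟨i, j, hfij, hij⟩ := Function.not_injective_iff.mp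
    fun hf' => hf (mem_map.mpr ⟨⟨f, hf'⟩, mem_univ _, rfl⟩)
  rw [det_zero_of_row_eq hij (by ext l; simp [hfij]), mul_zero]

theorem det_mul_eq_sum_minor_mul_minor {κ : Type*} [Fintype κ] [LinearOrder κ] {k : ℕ}
    (M : Matrix (Fin k) κ R) (N : Matrix κ (Fin k) R) :
    (M * N).det = ∑ S : {S : Finset κ // S.card = k},
      (M.submatrix id (S.1.orderEmbOfFin S.2)).det *
        (N.submatrix (S.1.orderEmbOfFin S.2) id).det := by
  rw [det_mul_eq_sum_embedding, ← (bijective_trans_orderEmbOfFin k).sum_comp,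
    Fintype.sum_prod_type]
  refine sum_congr rfl fun S _ => ?_
  rw [← det_mul, det_mul_eq_sum_embedding]
  rfl

end Matrix

theorem compound_mul_general {F : Type*} [CommRing F] {n m p : ℕ}
    (A : Matrix (Fin n) (Fin m) F) (B : Matrix (Fin m) (Fin p) F)
    (k : ℕ) :
    compound (A * B) k = compound A k * compound B k := by
  ext α γ
  rw [compound, of_apply, submatrix_mul _ _ _ id _ Function.bijective_id,
    det_mul_eq_sum_minor_mul_minor]
  rfl

/-- Cauchy–Binet formula for compound matrices: for `A : F^{n×m}`, `B : F^{m×p}`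
and `1 ≤ k ≤ min(n,m,p)`, `(AB)^{(k)} = A^{(k)} B^{(k)}`. -/
theorem compound_mul {F : Type*} [CommRing F] {n m p : ℕ}
    (A : Matrix (Fin n) (Fin m) F) (B : Matrix (Fin m) (Fin p) F)
    (k : ℕ) (hk : 1 ≤ k) (hkn : k ≤ n) (hkm : k ≤ m) (hkp : k ≤ p) :
    compound (A * B) k = compound A k * compound B k :=
  compound_mul_general A B k
end
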